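/- Let φ be a density on {-1,1}^n, x₁,...,x_m i.i.d. samples from φ, Δ(X) = avg_{s<t} ∑_{1≤|S|≤k} x_s^S x_t^S, μ = ∑_{1≤|S|≤k} φ̂(S)², and L_k(φ) = ∑_{1≤|S₁|,|S₂|≤k} φ̂(S₁⊕S₂)². Then Var[Δ(X)] ≤ (4/m²)·L_k(φ) + (4/m)·sqrt(L_k(φ))·μ. -/

import Mathlib

open Finset

noncomputable def sgn (b : Bool) : ℝ := if b then 1 else -1

noncomputable def chi {n : ℕ} (S : Finset (Fin n)) (x : Fin n → Bool) : ℝ :=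
  ∏ i ∈ S, sgn (x i)

/-- Expectation under the uniform distribution on `{-1,1}^n`. -/
noncomputable def expect {n : ℕ} (f : (Fin n → Bool) → ℝ) : ℝ :=
  (∑ x : Fin n → Bool, f x) / 2 ^ n

/-- Fourier coefficient `f̂(S) = E_x[f(x) x^S]`. -/
noncomputable def coeff {n : ℕ} (f : (Fin n → Bool) → ℝ) (S : Finset (Fin n)) : ℝ :=
  expect (fun x => f x * chi S x)

/-- A density function: nonnegative with mean 1 under the uniform measure. -/
def IsDensity {n : ℕ} (φ : (Fin n → Bool) → ℝ) : Prop :=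
  (∀ x, 0 ≤ φ x) ∧ expect φ = 1

/-- Total variation distance between densities: `(1/2) E_x |φ - ψ|`. -/
noncomputable def dTV {n : ℕ} (φ ψ : (Fin n → Bool) → ℝ) : ℝ :=
  expect (fun x => |φ x - ψ x|) / 2

/-- The nonempty sets of size at most `k`. -/
noncomputable def lowSets (n k : ℕ) : Finset (Finset (Fin n)) :=
  Finset.univ.filter fun S => 1 ≤ S.card ∧ S.card ≤ k

/-- Expectation of `f` over `m` i.i.d. samples drawn from the density `φ`. -/
noncomputable def eprod {n : ℕ} (φ : (Fin n → Bool) → ℝ) (m : ℕ)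
    (f : (Fin m → Fin n → Bool) → ℝ) : ℝ :=
  (∑ X : Fin m → Fin n → Bool, (∏ s, φ (X s)) * f X) / (2 : ℝ) ^ (n * m)

/-- `Δ(X) = avg_{s<t} ∑_{1 ≤ |S| ≤ k} (x_s)^S (x_t)^S`. -/
noncomputable def Delta (n k m : ℕ) (X : Fin m → Fin n → Bool) : ℝ :=
  (∑ p ∈ Finset.univ.filter (fun p : Fin m × Fin m => p.1 < p.2),
    ∑ S ∈ lowSets n k, chi S (X p.1) * chi S (X p.2)) / (m.choose 2 : ℝ)

/-!
Write `F(x, y) = ∑_{1 ≤ |S| ≤ k} x^S y^S`, so that `Δ` is the average of `F(x_s, x_t)` over the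
`(m choose 2)` pairs `s < t`, and `Var Δ` is the sum of the covariances of these terms over all
pairs of pairs, divided by `(m choose 2)²`. Since `x^S x^T = x^{S ∆ T}` and the samples are
independent, the covariance of the terms of the pairs `p` and `q` is `L - μ²` if `p = q`,
`∑_{S,T} φ̂(S ∆ T) φ̂(S) φ̂(T) - μ² ≤ √L μ` (Cauchy–Schwarz) if they share exactly one index, and
`0` if they are disjoint. A pair shares an index with at most `2 (m - 1)` pairs, so every row of
covariances sums to at most `L + 2 (m - 1) √L μ`, and the bound follows.
-/

noncomputable def expectUnder {n : ℕ} (φ g : (Fin n → Bool) → ℝ) : ℝ :=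
  expect fun x => φ x * g x

-- The function `F` above.
noncomputable def lowKernel (n k : ℕ) (x y : Fin n → Bool) : ℝ :=
  ∑ S ∈ lowSets n k, chi S x * chi S y

noncomputable def lowWeight {n : ℕ} (φ : (Fin n → Bool) → ℝ) (k : ℕ) : ℝ :=
  ∑ S ∈ lowSets n k, coeff φ S ^ 2

-- `L_k(φ)`; `lowWeight φ k` is `μ`.
noncomputable def lowSymmDiffWeight {n : ℕ} (φ : (Fin n → Bool) → ℝ) (k : ℕ) : ℝ :=
  ∑ S ∈ lowSets n k, ∑ T ∈ lowSets n k, coeff φ (symmDiff S T) ^ 2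

noncomputable def lowCrossWeight {n : ℕ} (φ : (Fin n → Bool) → ℝ) (k : ℕ) : ℝ :=
  ∑ S ∈ lowSets n k, ∑ T ∈ lowSets n k, coeff φ (symmDiff S T) * (coeff φ S * coeff φ T)

section Fourier

variable {n : ℕ}

lemma sgn_mul_self (b : Bool) : sgn b * sgn b = 1 := by cases b <;> simp [sgn]

lemma chi_mul_chi (S T : Finset (Fin n)) (x : Fin n → Bool) :
    chi S x * chi T x = chi (symmDiff S T) x := by
  have hsq : (∏ i ∈ S ∩ T, sgn (x i)) * ∏ i ∈ S ∩ T, sgn (x i) = 1 := by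
    rw [← prod_mul_distrib]
    exact prod_eq_one fun i _ => sgn_mul_self (x i)
  rw [chi, chi, ← prod_union_inter, ← sup_eq_union, ← symmDiff_sup_inf, sup_eq_union,
    inf_eq_inter,
    prod_union (show Disjoint (symmDiff S T) (S ∩ T) from disjoint_symmDiff_inf S T),
    mul_assoc, hsq, mul_one, chi]

lemma expectUnder_chi_mul_chi (φ : (Fin n → Bool) → ℝ) (S T : Finset (Fin n)) :
    expectUnder φ (fun x => chi S x * chi T x) = coeff φ (symmDiff S T) := by
  simp only [expectUnder, coeff, chi_mul_chi]

lemma lowKernel_comm (k : ℕ) (x y : Fin n → Bool) :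
    lowKernel n k x y = lowKernel n k y x := by
  simp only [lowKernel, mul_comm]

lemma lowKernel_mul_lowKernel (k : ℕ) (x y z w : Fin n → Bool) :
    lowKernel n k x y * lowKernel n k z w =
      ∑ S ∈ lowSets n k, ∑ T ∈ lowSets n k, chi S x * chi S y * (chi T z * chi T w) :=
  sum_mul_sum _ _ _ _

lemma lowWeight_nonneg (φ : (Fin n → Bool) → ℝ) (k : ℕ) : 0 ≤ lowWeight φ k :=
  sum_nonneg fun _ _ => sq_nonneg _

lemma lowSymmDiffWeight_nonneg (φ : (Fin n → Bool) → ℝ) (k : ℕ) :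
    0 ≤ lowSymmDiffWeight φ k :=
  sum_nonneg fun _ _ => sum_nonneg fun _ _ => sq_nonneg _

lemma lowCrossWeight_le (φ : (Fin n → Bool) → ℝ) (k : ℕ) :
    lowCrossWeight φ k ≤ √(lowSymmDiffWeight φ k) * lowWeight φ k := by
  have hprod : ∑ r ∈ lowSets n k ×ˢ lowSets n k, (coeff φ r.1 * coeff φ r.2) ^ 2 =
      lowWeight φ k ^ 2 := by
    rw [pow_two (lowWeight φ k), lowWeight, sum_mul_sum, sum_product]
    simp only [mul_pow]
  calc lowCrossWeight φ k
      = ∑ r ∈ lowSets n k ×ˢ lowSets n k,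
          coeff φ (symmDiff r.1 r.2) * (coeff φ r.1 * coeff φ r.2) := by
        rw [lowCrossWeight, sum_product]
    _ ≤ _ := Real.sum_mul_le_sqrt_mul_sqrt _ _ _
    _ = _ := by
        rw [hprod, Real.sqrt_sq (lowWeight_nonneg φ k), lowSymmDiffWeight, sum_product]

end Fourier

section Sampling

variable {n m : ℕ} {φ : (Fin n → Bool) → ℝ}

lemma eprod_sum {ι : Type*} (φ : (Fin n → Bool) → ℝ) (t : Finset ι)
    (f : ι → (Fin m → Fin n → Bool) → ℝ) :
    eprod φ m (fun X => ∑ i ∈ t, f i X) = ∑ i ∈ t, eprod φ m (f i) := by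
  simp only [eprod, ← sum_div, mul_sum]
  rw [sum_comm]

lemma eprod_div_const (φ : (Fin n → Bool) → ℝ) (f : (Fin m → Fin n → Bool) → ℝ) (c : ℝ) :
    eprod φ m (fun X => f X / c) = eprod φ m f / c := by
  simp only [eprod, mul_div_assoc', sum_div, div_right_comm _ c]

lemma eprod_prod (φ : (Fin n → Bool) → ℝ) (f : Fin m → (Fin n → Bool) → ℝ) :
    eprod φ m (fun X => ∏ u, f u (X u)) = ∏ u, expectUnder φ (f u) := by
  simp only [eprod, expectUnder, _root_.expect, prod_div_distrib, prod_const, card_univ,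
    Fintype.card_fin, ← pow_mul, Fintype.prod_sum, prod_mul_distrib]

lemma eprod_prod_comp_of_injective (hφ : expect φ = 1) {ι : Type*} [Fintype ι]
    {a : ι → Fin m} (ha : Function.Injective a) (g : ι → (Fin n → Bool) → ℝ) :
    eprod φ m (fun X => ∏ i, g i (X (a i))) = ∏ i, expectUnder φ (g i) := by
  classical
  set f := Function.extend a g fun _ _ => 1
  have hf : ∀ u ∉ Set.range a, f u = fun _ => 1 := fun u hu =>
    Function.extend_apply' _ _ _ (by simpa using hu)
  have hfa : ∀ i, f (a i) = g i := ha.extend_apply g _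
  have hone : expectUnder φ (fun _ => 1) = 1 := by simpa only [expectUnder, mul_one] using hφ
  calc eprod φ m (fun X => ∏ i, g i (X (a i)))
      = eprod φ m (fun X => ∏ u, f u (X u)) := by
        congr 1
        funext X
        exact Fintype.prod_of_injective a ha _ _ (fun u hu => by simp [hf u hu])
          (fun i => by rw [hfa])
    _ = ∏ u, expectUnder φ (f u) := eprod_prod φ f
    _ = ∏ i, expectUnder φ (g i) :=
        (Fintype.prod_of_injective a ha _ _ (fun u hu => by rw [hf u hu, hone])
          (fun i => by rw [hfa])).symm

lemma eprod_mul₂ (hφ : expect φ = 1) {a b : Fin m} (hab : a ≠ b) (g h : (Fin n → Bool) → ℝ) :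
    eprod φ m (fun X => g (X a) * h (X b)) = expectUnder φ g * expectUnder φ h := by
  simpa using eprod_prod_comp_of_injective hφ (a := ![a, b]) (by simp [hab]) ![g, h]

lemma eprod_mul₃ (hφ : expect φ = 1) {a b c : Fin m} (hab : a ≠ b) (hac : a ≠ c)
    (hbc : b ≠ c) (g h l : (Fin n → Bool) → ℝ) :
    eprod φ m (fun X => g (X a) * h (X b) * l (X c)) =
      expectUnder φ g * expectUnder φ h * expectUnder φ l := by
  have ha : Function.Injective ![a, b, c] := by
    simp only [Matrix.vecCons, Fin.cons_injective_iff]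
    simp [*, Function.Injective, eq_iff_true_of_subsingleton]
  simpa [Fin.prod_univ_succ, mul_assoc] using eprod_prod_comp_of_injective hφ ha ![g, h, l]

lemma eprod_mul₄ (hφ : expect φ = 1) {a b c d : Fin m} (hab : a ≠ b) (hac : a ≠ c)
    (had : a ≠ d) (hbc : b ≠ c) (hbd : b ≠ d) (hcd : c ≠ d) (g h l r : (Fin n → Bool) → ℝ) :
    eprod φ m (fun X => g (X a) * h (X b) * l (X c) * r (X d)) =
      expectUnder φ g * expectUnder φ h * expectUnder φ l * expectUnder φ r := by
  have ha : Function.Injective ![a, b, c, d] := by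
    simp only [Matrix.vecCons, Fin.cons_injective_iff]
    simp [*, Function.Injective, eq_iff_true_of_subsingleton]
  simpa [Fin.prod_univ_succ, mul_assoc] using eprod_prod_comp_of_injective hφ ha ![g, h, l, r]

lemma eprod_sq_sub_sq_eprod {ι : Type*} (φ : (Fin n → Bool) → ℝ) (P : Finset ι)
    (A : ι → (Fin m → Fin n → Bool) → ℝ) (c : ℝ) :
    eprod φ m (fun X => ((∑ p ∈ P, A p X) / c) ^ 2) -
        eprod φ m (fun X => (∑ p ∈ P, A p X) / c) ^ 2 =
      (∑ p ∈ P, ∑ q ∈ P,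
        (eprod φ m (fun X => A p X * A q X) - eprod φ m (A p) * eprod φ m (A q))) / c ^ 2 := by
  have hsq : ∀ X, ((∑ p ∈ P, A p X) / c) ^ 2 =
      (∑ p ∈ P, ∑ q ∈ P, A p X * A q X) / c ^ 2 := fun X => by
    rw [div_pow, sq, sum_mul_sum]
  simp only [hsq, eprod_div_const, eprod_sum, div_pow, sq (∑ p ∈ P, eprod φ m (A p)),
    sum_mul_sum, sum_sub_distrib, sub_div]

end Sampling

section Pairs

variable {m : ℕ}

lemma card_pairs_containing_le (a : Fin m) :
    #{q : Fin m × Fin m | q.1 < q.2 ∧ (q.1 = a ∨ q.2 = a)} ≤ m - 1 := by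
  calc _ ≤ #(univ.erase a) := by
        refine card_le_card_of_injOn (fun q => if q.1 = a then q.2 else q.1) ?_ ?_
        · intro q hq
          simp only [coe_filter, Set.mem_ofPred_eq, mem_univ, true_and] at hq
          simp only [coe_erase, coe_univ, Set.mem_sdiff, Set.mem_univ, Set.mem_singleton_iff,
            true_and]
          split_ifs <;> omega
        · intro q hq q' hq' h
          simp only [coe_filter, Set.mem_ofPred_eq, mem_univ, true_and] at hq hq'
          dsimp only at h
          ext <;> split_ifs at h <;> omega
    _ = m - 1 := by rw [card_erase_of_mem (mem_univ a), card_univ, Fintype.card_fin]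

lemma card_pairs_meeting_le (p : Fin m × Fin m) :
    #{q : Fin m × Fin m | q.1 < q.2 ∧ (q.1 = p.1 ∨ q.1 = p.2 ∨ q.2 = p.1 ∨ q.2 = p.2)} ≤
      2 * (m - 1) :=
  calc _ ≤ #(({q : Fin m × Fin m | q.1 < q.2 ∧ (q.1 = p.1 ∨ q.2 = p.1)} : Finset _) ∪
          ({q : Fin m × Fin m | q.1 < q.2 ∧ (q.1 = p.2 ∨ q.2 = p.2)} : Finset _)) := by
        refine card_le_card fun q hq => ?_
        simp only [mem_filter, mem_univ, true_and, mem_union] at hq ⊢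
        tauto
    _ ≤ _ := (card_union_le _ _).trans <| by
        have := card_pairs_containing_le p.1
        have := card_pairs_containing_le p.2
        omega

end Pairs

section Kernel

variable {n m : ℕ} {φ : (Fin n → Bool) → ℝ} {k : ℕ}

lemma eprod_lowKernel (hφ : expect φ = 1) {a b : Fin m} (hab : a ≠ b) :
    eprod φ m (fun X => lowKernel n k (X a) (X b)) = lowWeight φ k := by
  simp only [lowKernel, eprod_sum, eprod_mul₂ hφ hab, lowWeight, sq]
  rfl

lemma eprod_lowKernel_mul_lowKernel (φ : (Fin n → Bool) → ℝ) (a b c d : Fin m) :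
    eprod φ m (fun X => lowKernel n k (X a) (X b) * lowKernel n k (X c) (X d)) =
      ∑ S ∈ lowSets n k, ∑ T ∈ lowSets n k,
        eprod φ m (fun X => chi S (X a) * chi S (X b) * (chi T (X c) * chi T (X d))) := by
  simp only [lowKernel_mul_lowKernel, eprod_sum]

lemma eprod_lowKernel_sq (hφ : expect φ = 1) {a b : Fin m} (hab : a ≠ b) :
    eprod φ m (fun X => lowKernel n k (X a) (X b) * lowKernel n k (X a) (X b)) =
      lowSymmDiffWeight φ k := by
  rw [eprod_lowKernel_mul_lowKernel]
  refine sum_congr rfl fun S _ => sum_congr rfl fun T _ => ?_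
  calc _ = eprod φ m (fun X => chi S (X a) * chi T (X a) * (chi S (X b) * chi T (X b))) := by
        congr 1; funext X; ring
    _ = _ := by
        rw [eprod_mul₂ hφ hab (fun x => chi S x * chi T x) (fun x => chi S x * chi T x),
          expectUnder_chi_mul_chi, sq]

lemma eprod_lowKernel_mul_lowKernel_of_common (hφ : expect φ = 1) {a b c : Fin m}
    (hab : a ≠ b) (hac : a ≠ c) (hbc : b ≠ c) :
    eprod φ m (fun X => lowKernel n k (X a) (X b) * lowKernel n k (X a) (X c)) =
      lowCrossWeight φ k := by
  rw [eprod_lowKernel_mul_lowKernel]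
  refine sum_congr rfl fun S _ => sum_congr rfl fun T _ => ?_
  calc _ = eprod φ m (fun X => chi S (X a) * chi T (X a) * chi S (X b) * chi T (X c)) := by
        congr 1; funext X; ring
    _ = _ := by
        rw [eprod_mul₃ hφ hab hac hbc (fun x => chi S x * chi T x), expectUnder_chi_mul_chi,
          mul_assoc]
        rfl

lemma eprod_lowKernel_mul_lowKernel_of_disjoint (hφ : expect φ = 1) {a b c d : Fin m}
    (hab : a ≠ b) (hac : a ≠ c) (had : a ≠ d) (hbc : b ≠ c) (hbd : b ≠ d) (hcd : c ≠ d) :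
    eprod φ m (fun X => lowKernel n k (X a) (X b) * lowKernel n k (X c) (X d)) =
      lowWeight φ k ^ 2 := by
  rw [eprod_lowKernel_mul_lowKernel, sq, lowWeight, sum_mul_sum]
  refine sum_congr rfl fun S _ => sum_congr rfl fun T _ => ?_
  calc _ = eprod φ m (fun X => chi S (X a) * chi S (X b) * chi T (X c) * chi T (X d)) := by
        simp only [mul_assoc]
    _ = _ := by
        rw [eprod_mul₄ hφ hab hac had hbc hbd hcd (chi S) (chi S) (chi T) (chi T)]
        simp only [sq, mul_assoc]
        rfl

variable (n k) in
noncomputable def pairKernel (p : Fin m × Fin m) (X : Fin m → Fin n → Bool) : ℝ :=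
  lowKernel n k (X p.1) (X p.2)

lemma pairKernel_swap (p : Fin m × Fin m) : pairKernel n k p.swap = pairKernel n k p :=
  funext fun X => lowKernel_comm k (X p.2) (X p.1)

variable (φ k) in
noncomputable def pairKernelCov (p q : Fin m × Fin m) : ℝ :=
  eprod φ m (fun X => pairKernel n k p X * pairKernel n k q X) -
    eprod φ m (pairKernel n k p) * eprod φ m (pairKernel n k q)

lemma eprod_pairKernel_mul_pairKernel_of_meet (hφ : expect φ = 1) {p q : Fin m × Fin m}
    (hp : p.1 < p.2) (hq : q.1 < q.2) (hqp : q ≠ p)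
    (hmeet : q.1 = p.1 ∨ q.1 = p.2 ∨ q.2 = p.1 ∨ q.2 = p.2) :
    eprod φ m (fun X => pairKernel n k p X * pairKernel n k q X) = lowCrossWeight φ k := by
  have hne : q.1 ≠ p.1 ∨ q.2 ≠ p.2 := by
    by_contra! h
    exact hqp (Prod.ext h.1 h.2)
  have common : ∀ {p q : Fin m × Fin m}, p.1 ≠ p.2 → q.1 ≠ q.2 → p.1 = q.1 → p.2 ≠ q.2 →
      eprod φ m (fun X => pairKernel n k p X * pairKernel n k q X) = lowCrossWeight φ k := by
    rintro ⟨a, b⟩ ⟨_, c⟩ hab hac rfl hbc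
    exact eprod_lowKernel_mul_lowKernel_of_common hφ hab hac hbc
  -- By `pairKernel_swap`, the common index can be moved to the first slot of both pairs.
  have hswap : p.swap.1 = p.2 ∧ p.swap.2 = p.1 ∧ q.swap.1 = q.2 ∧ q.swap.2 = q.1 :=
    ⟨rfl, rfl, rfl, rfl⟩
  rcases hmeet with h | h | h | h
  · exact common (by omega) (by omega) (by omega) (by omega)
  · rw [← pairKernel_swap p]
    exact common (by omega) (by omega) (by omega) (by omega)
  · rw [← pairKernel_swap q]
    exact common (by omega) (by omega) (by omega) (by omega)
  · rw [← pairKernel_swap p, ← pairKernel_swap q]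
    exact common (by omega) (by omega) (by omega) (by omega)

lemma pairKernelCov_le (hφ : expect φ = 1) {p q : Fin m × Fin m} (hp : p.1 < p.2)
    (hq : q.1 < q.2) :
    pairKernelCov φ k p q ≤
      if q = p then lowSymmDiffWeight φ k
      else if q.1 = p.1 ∨ q.1 = p.2 ∨ q.2 = p.1 ∨ q.2 = p.2 then
        √(lowSymmDiffWeight φ k) * lowWeight φ k
      else 0 := by
  have hmean : ∀ r : Fin m × Fin m, r.1 < r.2 → eprod φ m (pairKernel n k r) = lowWeight φ k :=
    fun r hr => eprod_lowKernel hφ hr.ne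
  rw [pairKernelCov, hmean p hp, hmean q hq]
  split_ifs with hqp hmeet
  · subst hqp
    rw [show eprod φ m (fun X => pairKernel n k q X * pairKernel n k q X) =
      lowSymmDiffWeight φ k from eprod_lowKernel_sq hφ hq.ne]
    nlinarith [mul_self_nonneg (lowWeight φ k)]
  · rw [eprod_pairKernel_mul_pairKernel_of_meet hφ hp hq hqp hmeet]
    nlinarith [lowCrossWeight_le φ k, mul_self_nonneg (lowWeight φ k)]
  · simp only [not_or] at hmeet
    rw [show eprod φ m (fun X => pairKernel n k p X * pairKernel n k q X) = lowWeight φ k ^ 2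
      from eprod_lowKernel_mul_lowKernel_of_disjoint hφ (by omega) (by omega) (by omega)
        (by omega) (by omega) (by omega)]
    nlinarith

lemma sum_pairKernelCov_le (hφ : expect φ = 1) {p : Fin m × Fin m} (hp : p.1 < p.2) :
    ∑ q ∈ univ.filter (fun q : Fin m × Fin m => q.1 < q.2), pairKernelCov φ k p q ≤
      lowSymmDiffWeight φ k +
        2 * ((m - 1 : ℕ) : ℝ) * (√(lowSymmDiffWeight φ k) * lowWeight φ k) := by
  set P := univ.filter fun q : Fin m × Fin m => q.1 < q.2
  set B := √(lowSymmDiffWeight φ k) * lowWeight φ k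
  have hB : 0 ≤ B := mul_nonneg (Real.sqrt_nonneg _) (lowWeight_nonneg φ k)
  have hpP : p ∈ P := mem_filter.2 ⟨mem_univ p, hp⟩
  calc _ ≤ ∑ q ∈ P, ((if q = p then lowSymmDiffWeight φ k else 0) +
          if q.1 = p.1 ∨ q.1 = p.2 ∨ q.2 = p.1 ∨ q.2 = p.2 then B else 0) := by
        refine sum_le_sum fun q hq => (pairKernelCov_le hφ hp (mem_filter.1 hq).2).trans ?_
        split_ifs <;> linarith
    _ = lowSymmDiffWeight φ k +
          #{q ∈ P | q.1 = p.1 ∨ q.1 = p.2 ∨ q.2 = p.1 ∨ q.2 = p.2} * B := by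
        rw [sum_add_distrib, sum_ite_eq' P p, if_pos hpP, sum_ite, sum_const_zero, add_zero,
          sum_const, nsmul_eq_mul]
    _ ≤ _ := by
        gcongr
        rw [filter_filter]
        exact_mod_cast card_pairs_meeting_le p

end Kernel

lemma add_two_mul_pred_div_choose_two_le {m : ℕ} (hm : 2 ≤ m) {L B : ℝ} (hL : 0 ≤ L) :
    (L + 2 * ((m - 1 : ℕ) : ℝ) * B) / (m.choose 2 : ℝ) ≤
      4 / (m : ℝ) ^ 2 * L + 4 / (m : ℝ) * B := by
  have hm' : (2 : ℝ) ≤ m := by exact_mod_cast hm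
  have hm1 : (m : ℝ) - 1 ≠ 0 := by linarith
  rw [Nat.cast_choose_two, Nat.cast_sub (by omega), Nat.cast_one]
  calc _ = 2 / ((m : ℝ) * (m - 1)) * L + 4 / (m : ℝ) * B := by
        field_simp
        ring
    _ ≤ _ := by
        gcongr ?_ * L + _
        rw [div_le_div_iff₀ (by nlinarith) (by positivity)]
        nlinarith

theorem stmt12 {n k m : ℕ} (hm : 2 ≤ m) (φ : (Fin n → Bool) → ℝ)
    (hφ : IsDensity φ) (μ L : ℝ)
    (hμ : μ = ∑ S ∈ lowSets n k, (coeff φ S) ^ 2)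
    (hL : L = ∑ S₁ ∈ lowSets n k, ∑ S₂ ∈ lowSets n k, (coeff φ (symmDiff S₁ S₂)) ^ 2) :
    eprod φ m (fun X => (Delta n k m X) ^ 2) - (eprod φ m (Delta n k m)) ^ 2 ≤
      4 / (m : ℝ) ^ 2 * L + 4 / (m : ℝ) * Real.sqrt L * μ := by
  set P := univ.filter fun p : Fin m × Fin m => p.1 < p.2
  have hP : (#P : ℝ) = m.choose 2 := by
    have := card_product_filter_lt (s := (univ : Finset (Fin m)))
    rw [univ_product_univ, card_univ, Fintype.card_fin] at this
    exact_mod_cast this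
  have hrow : ∀ p ∈ P,
      ∑ q ∈ P, pairKernelCov φ k p q ≤ L + 2 * ((m - 1 : ℕ) : ℝ) * (√L * μ) := by
    intro p hp
    rw [hμ, hL]
    exact sum_pairKernelCov_le hφ.2 (mem_filter.1 hp).2
  calc _ = (∑ p ∈ P, ∑ q ∈ P, pairKernelCov φ k p q) / (m.choose 2 : ℝ) ^ 2 :=
        eprod_sq_sub_sq_eprod φ P (pairKernel n k) _
    _ ≤ #P * (L + 2 * ((m - 1 : ℕ) : ℝ) * (√L * μ)) / (m.choose 2 : ℝ) ^ 2 := by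
        gcongr
        exact (sum_le_card_nsmul _ _ _ hrow).trans_eq (nsmul_eq_mul _ _)
    _ = (L + 2 * ((m - 1 : ℕ) : ℝ) * (√L * μ)) / (m.choose 2 : ℝ) := by
        rw [hP]
        field_simp
    _ ≤ _ := by
        rw [mul_assoc _ (√L)]
        exact add_two_mul_pred_div_choose_two_le hm (hL ▸ lowSymmDiffWeight_nonneg φ k)
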